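/- arXiv:1808.10601 — 4 statements merged into one kernel-verified Lean document; each statement's English description precedes it below -/
import Mathlib

section
/- Any discrete probability distribution p on {0,1}^n can be approximated arbitrarily well in Kullback–Leibler divergence by a restricted Boltzmann machine with k+1 hidden units, where k = |supp(p)| is the number of configurations with nonzero probability. That is, for every ε > 0 there exist RBM parameters (real weights and biases, with k+1 hidden units) whose marginal visible distribution q satisfies D_KL(p ‖ q) < ε. -/
/-!
Hidden unit `j` is tuned to the `j`-th point `u j` of the support of `p`: with weights
`L (2 u_j - 1)` and a suitable bias its input at `v` is `log (p (u j) / t) - L d(v, u j)`, where `d`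
is the Hamming distance. Summing out the hidden layer, the unnormalised marginal becomes
`2 ∏ j (1 + (p (u j) / t) r ^ d(v, u j))` with `r = e^{-L}`. For `r = t²` this product is at least
`p v / t` on the support and at most `(1 + t)^k (1 + p v / t)` everywhere, so `p / q` is at most
`(1 + t)^k (2^n t + 1)` on the support, and the divergence tends to `0` with `t`.
-/

def bval (t : Bool) : ℝ := if t then 1 else 0

open Finset Real Filter Topology

section HiddenLayer

variable {ι κ : Type*} [Fintype ι] [Fintype κ] [DecidableEq κ]

noncomputable def rbmWeight (a : ι → ℝ) (b : κ → ℝ) (W : ι → κ → ℝ) (v : ι → Bool) : ℝ :=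
  ∑ h : κ → Bool, exp (∑ i, a i * bval (v i) + ∑ j, b j * bval (h j)
    + ∑ i, ∑ j, bval (v i) * W i j * bval (h j))

lemma sum_exp_sum_mul_bval (c : κ → ℝ) :
    ∑ h : κ → Bool, exp (∑ j, c j * bval (h j)) = ∏ j, (1 + exp (c j)) := by
  simp_rw [exp_sum]
  rw [← Fintype.prod_sum (fun j t => exp (c j * bval t))]
  simp [bval, add_comm]

lemma rbmWeight_eq_exp_mul_prod (a : ι → ℝ) (b : κ → ℝ) (W : ι → κ → ℝ) (v : ι → Bool) :
    rbmWeight a b W v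
      = exp (∑ i, a i * bval (v i)) * ∏ j, (1 + exp (b j + ∑ i, bval (v i) * W i j)) := by
  rw [rbmWeight, ← sum_exp_sum_mul_bval, mul_sum]
  refine sum_congr rfl fun h _ => ?_
  rw [← exp_add, add_assoc, sum_comm (f := fun i j => bval (v i) * W i j * bval (h j))]
  simp only [add_mul, sum_add_distrib, sum_mul]

end HiddenLayer

section TemplateUnit

variable {ι : Type*} [Fintype ι]

lemma cast_hammingDist_eq_sum_bval (v u : ι → Bool) :
    (hammingDist v u : ℝ) = ∑ i, bval (u i) - ∑ i, bval (v i) * (2 * bval (u i) - 1) := by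
  rw [hammingDist, natCast_card_filter, ← sum_sub_distrib]
  refine sum_congr rfl fun i _ => ?_
  cases v i <;> cases u i <;> norm_num [bval]

noncomputable def templateWeight (r : ℝ) (u : ι → Bool) (i : ι) : ℝ :=
  -log r * (2 * bval (u i) - 1)

noncomputable def templateBias (w r : ℝ) (u : ι → Bool) : ℝ :=
  log w + log r * ∑ i, bval (u i)

lemma exp_templateBias_add {w r : ℝ} (hw : 0 < w) (hr : 0 < r) (u v : ι → Bool) :
    exp (templateBias w r u + ∑ i, bval (v i) * templateWeight r u i)
      = w * r ^ hammingDist v u := by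
  have hweights : ∑ i, bval (v i) * templateWeight r u i
      = -log r * ∑ i, bval (v i) * (2 * bval (u i) - 1) := by
    rw [mul_sum]
    exact sum_congr rfl fun i _ => by rw [templateWeight]; ring
  have hinput : templateBias w r u + ∑ i, bval (v i) * templateWeight r u i
      = log w + hammingDist v u * log r := by
    rw [hweights, cast_hammingDist_eq_sum_bval, templateBias]
    ring
  rw [hinput, exp_add, exp_log hw, exp_nat_mul, exp_log hr]

end TemplateUnit

section TemplateProduct

variable {ι β κ : Type*} [Fintype ι] [DecidableEq β] [Fintype κ]

noncomputable def templateProduct (u : κ → ι → β) (g : (ι → β) → ℝ) (r : ℝ) (v : ι → β) : ℝ :=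
  ∏ j, (1 + g (u j) * r ^ hammingDist v (u j))

variable {u : κ → ι → β} {g : (ι → β) → ℝ} {r : ℝ}

lemma templateProduct_pos (hg : ∀ v, 0 ≤ g v) (hr : 0 ≤ r) (v : ι → β) :
    0 < templateProduct u g r v :=
  prod_pos fun j _ => by have := hg (u j); positivity

lemma le_templateProduct (hg : ∀ v, 0 ≤ g v) (hr : 0 ≤ r) (m : κ) :
    g (u m) ≤ templateProduct u g r (u m) := by
  have hfactor : ∀ j, 1 ≤ 1 + g (u j) * r ^ hammingDist (u m) (u j) := fun j =>
    le_add_of_nonneg_right (mul_nonneg (hg (u j)) (pow_nonneg hr _))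
  calc g (u m) ≤ ∏ j ∈ {m}, (1 + g (u j) * r ^ hammingDist (u m) (u j)) := by simp
    _ ≤ templateProduct u g r (u m) :=
      prod_le_prod_of_subset_of_one_le (subset_univ _) (fun j _ => by linarith [hfactor j])
        fun j _ _ => hfactor j

/-- Off its own template each factor is at most `1 + η`, and by injectivity at most one factor
sits on `v`. -/
lemma templateProduct_le (hu : Function.Injective u) (hg : ∀ v, 0 ≤ g v) (hr0 : 0 ≤ r)
    (hr1 : r ≤ 1) {η : ℝ} (hη : ∀ j, g (u j) * r ≤ η) (v : ι → β) :
    templateProduct u g r v ≤ (1 + η) ^ Fintype.card κ * (1 + g v) := by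
  classical
  have hfactor : ∀ j, 1 + g (u j) * r ^ hammingDist v (u j)
      ≤ (1 + η) * if u j = v then 1 + g v else 1 := fun j => by
    have hη0 : 0 ≤ η := (mul_nonneg (hg (u j)) hr0).trans (hη j)
    split_ifs with hj
    · rw [hj, hammingDist_self, pow_zero, mul_one]
      nlinarith [hg v]
    · have hd : hammingDist v (u j) ≠ 0 := hammingDist_ne_zero.mpr (Ne.symm hj)
      have := mul_le_mul_of_nonneg_left (pow_le_of_le_one hr0 hr1 hd) (hg (u j))
      linarith [hη j]
  have hsingle : #{j | u j = v} ≤ 1 :=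
    card_le_one.mpr fun i hi j hj => hu <| by simp_all
  have hpow : 0 ≤ (1 + η) ^ Fintype.card κ := by
    rcases isEmpty_or_nonempty κ with hκ | ⟨⟨j⟩⟩
    · simp
    · have := (mul_nonneg (hg (u j)) hr0).trans (hη j); positivity
  calc templateProduct u g r v
      ≤ ∏ j, (1 + η) * if u j = v then 1 + g v else 1 :=
        prod_le_prod (fun j _ => by have := hg (u j); positivity) fun j _ => hfactor j
    _ = (1 + η) ^ Fintype.card κ * (1 + g v) ^ #{j | u j = v} := by
        rw [prod_mul_distrib, prod_const, prod_ite, prod_const, prod_const_one, mul_one, card_univ]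
    _ ≤ (1 + η) ^ Fintype.card κ * (1 + g v) := by
        refine mul_le_mul_of_nonneg_left ?_ hpow
        simpa using pow_le_pow_right₀ (le_add_of_nonneg_right (hg v)) hsingle

end TemplateProduct

section KullbackLeibler

variable {V : Type*} [Fintype V] {p : V → ℝ}

noncomputable def klSum (p q : V → ℝ) : ℝ :=
  ∑ v, if p v = 0 then 0 else p v * log (p v / q v)

lemma klSum_le (hp0 : ∀ v, 0 ≤ p v) (hp1 : ∑ v, p v = 1) {q : V → ℝ} {c : ℝ}
    (h : ∀ v, p v ≠ 0 → log (p v / q v) ≤ c) : klSum p q ≤ c :=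
  calc klSum p q ≤ ∑ v, p v * c := sum_le_sum fun v _ => by
        split_ifs with hv
        · simp [hv]
        · exact mul_le_mul_of_nonneg_left (h v hv) (hp0 v)
    _ = c := by rw [← sum_mul, hp1, one_mul]

lemma klSum_normalize_le (hp0 : ∀ v, 0 ≤ p v) (hp1 : ∑ v, p v = 1) {P : V → ℝ} {t B : ℝ}
    (ht : 0 < t) (hP : ∀ v, 0 < P v) (hlow : ∀ v, p v ≤ t * P v)
    (hup : ∀ v, P v ≤ B * (1 + p v / t)) :
    klSum p (fun v => P v / ∑ w, P w) ≤ log (B * (Fintype.card V * t + 1)) := by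
  have hZ : ∑ w, P w ≤ B * (Fintype.card V + 1 / t) :=
    calc ∑ w, P w ≤ ∑ w, B * (1 + p w / t) := sum_le_sum fun w _ => hup w
      _ = B * (Fintype.card V + 1 / t) := by
        rw [← mul_sum, sum_add_distrib, ← sum_div, hp1]; simp
  refine klSum_le hp0 hp1 fun v hv => ?_
  have hpv : 0 < p v := (hp0 v).lt_of_ne' hv
  have hZpos : 0 < ∑ w, P w := sum_pos (fun w _ => hP w) ⟨v, mem_univ v⟩
  refine log_le_log (by have := hP v; positivity) ?_
  calc p v / (P v / ∑ w, P w) = p v / P v * ∑ w, P w := by field_simp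
    _ ≤ t * (B * (Fintype.card V + 1 / t)) :=
      mul_le_mul ((div_le_iff₀ (hP v)).mpr (hlow v)) hZ hZpos.le ht.le
    _ = B * (Fintype.card V * t + 1) := by field_simp

end KullbackLeibler

lemma klSum_templateProduct_le {ι β κ : Type*} [Fintype ι] [DecidableEq ι] [Fintype β]
    [DecidableEq β] [Fintype κ] {p : (ι → β) → ℝ} (hp0 : ∀ v, 0 ≤ p v) (hp1 : ∑ v, p v = 1)
    {u : κ → ι → β} (hu : Function.Injective u) (hsupp : ∀ v, p v ≠ 0 → v ∈ Set.range u) {t : ℝ}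
    (ht0 : 0 < t) (ht1 : t ≤ 1) :
    klSum p (fun v => templateProduct u (p · / t) (t ^ 2) v
        / ∑ w, templateProduct u (p · / t) (t ^ 2) w)
      ≤ log ((1 + t) ^ Fintype.card κ * (Fintype.card (ι → β) * t + 1)) := by
  have hg : ∀ v, 0 ≤ p v / t := fun v => div_nonneg (hp0 v) ht0.le
  have hp_le_one : ∀ v, p v ≤ 1 := fun v => hp1 ▸ single_le_sum (fun w _ => hp0 w) (mem_univ v)
  refine klSum_normalize_le hp0 hp1 ht0 (templateProduct_pos hg (sq_nonneg t)) (fun v => ?_)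
    (templateProduct_le hu hg (sq_nonneg t) (pow_le_one₀ ht0.le ht1) fun j => ?_)
  · by_cases hv : p v = 0
    · rw [hv]; exact mul_nonneg ht0.le (templateProduct_pos hg (sq_nonneg t) v).le
    · obtain ⟨j, rfl⟩ := hsupp v hv
      rw [← div_le_iff₀' ht0]
      exact le_templateProduct hg (sq_nonneg t) j
  · rw [show p (u j) / t * t ^ 2 = p (u j) * t by field_simp]
    exact mul_le_of_le_one_left ht0.le (hp_le_one _)

lemma exists_log_one_add_pow_mul_lt (k : ℕ) (N : ℝ) {ε : ℝ} (hε : 0 < ε) :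
    ∃ t, 0 < t ∧ t ≤ 1 ∧ log ((1 + t) ^ k * (N * t + 1)) < ε := by
  have hlim : Tendsto (fun t : ℝ => log ((1 + t) ^ k * (N * t + 1))) (𝓝[>] 0) (𝓝 0) := by
    have hcont : ContinuousAt (fun t : ℝ => log ((1 + t) ^ k * (N * t + 1))) 0 :=
      ContinuousAt.log (by fun_prop) (by simp)
    simpa using hcont.tendsto.mono_left nhdsWithin_le_nhds
  obtain ⟨t, htε, ht0, ht1⟩ :=
    ((hlim.eventually (gt_mem_nhds hε)).and (Ioc_mem_nhdsGT one_pos)).exists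
  exact ⟨t, ht0, ht1, htε⟩

lemma Finset.exists_injective_range_eq {α : Type*} (s : Finset α) {k : ℕ} (hk : #s = k) :
    ∃ u : Fin k → α, Function.Injective u ∧ Set.range u = s := by
  let e := s.equivFinOfCardEq hk
  refine ⟨fun j => e.symm j, Subtype.val_injective.comp e.symm.injective, ?_⟩
  ext x
  exact ⟨fun ⟨j, hj⟩ => hj ▸ (e.symm j).2, fun hx => ⟨e ⟨x, hx⟩, by simp⟩⟩

section TemplateRBM

variable {ι : Type*} [Fintype ι] {k : ℕ}

noncomputable def templateRBMBias (u : Fin k → ι → Bool) (g : (ι → Bool) → ℝ) (r : ℝ) :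
    Fin (k + 1) → ℝ :=
  Fin.snoc (fun j => templateBias (g (u j)) r (u j)) 0

noncomputable def templateRBMWeight (u : Fin k → ι → Bool) (r : ℝ) (i : ι) : Fin (k + 1) → ℝ :=
  Fin.snoc (fun j => templateWeight r (u j) i) 0

lemma rbmWeight_template {u : Fin k → ι → Bool} {g : (ι → Bool) → ℝ} {r : ℝ}
    (hg : ∀ j, 0 < g (u j)) (hr : 0 < r) (v : ι → Bool) :
    rbmWeight 0 (templateRBMBias u g r) (templateRBMWeight u r) v
      = 2 * templateProduct u g r v := by
  rw [rbmWeight_eq_exp_mul_prod, Fin.prod_univ_castSucc]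
  simp only [templateRBMBias, templateRBMWeight, Fin.snoc_castSucc, Fin.snoc_last,
    exp_templateBias_add (hg _) hr, Pi.zero_apply, zero_mul, mul_zero, sum_const_zero, add_zero,
    exp_zero, one_mul, templateProduct]
  norm_num [mul_comm]

end TemplateRBM

open scoped Classical in
/-- Le Roux–Bengio universal approximation theorem for RBMs: any probability
distribution `p` on `{0,1}^n` with support of cardinality `k` can be approximated
arbitrarily well in Kullback–Leibler divergence by the marginal visible
distribution of an RBM with `k + 1` hidden units. -/
theorem rbm_universal_approximation (n : ℕ) (p : (Fin n → Bool) → ℝ)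
    (hp0 : ∀ v, 0 ≤ p v) (hp1 : ∑ v, p v = 1)
    (k : ℕ) (hk : k = (Finset.univ.filter (fun v => p v ≠ 0)).card) :
    ∀ ε > 0, ∃ (a : Fin n → ℝ) (b : Fin (k + 1) → ℝ) (W : Fin n → Fin (k + 1) → ℝ),
      let G : (Fin n → Bool) → ℝ := fun v =>
        ∑ h : Fin (k + 1) → Bool,
          Real.exp (∑ i, a i * bval (v i) + ∑ j, b j * bval (h j)
            + ∑ i, ∑ j, bval (v i) * W i j * bval (h j));
      let Z : ℝ := ∑ v, G v;
      let q : (Fin n → Bool) → ℝ := fun v => G v / Z;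
      (∑ v, if p v = 0 then 0 else p v * Real.log (p v / q v)) < ε := by
  intro ε hε
  obtain ⟨t, ht0, ht1, htε⟩ := exists_log_one_add_pow_mul_lt k (2 ^ n) hε
  obtain ⟨u, hu, hrange⟩ := Finset.exists_injective_range_eq _ hk.symm
  have hsupp : ∀ v, p v ≠ 0 → v ∈ Set.range u := fun v hv => by simpa [hrange] using hv
  have hpu : ∀ j, 0 < p (u j) / t := fun j => by
    have hj : u j ∈ Set.range u := Set.mem_range_self j
    simp only [hrange, coe_filter, mem_univ, true_and, Set.mem_ofPred_eq] at hj
    exact div_pos ((hp0 _).lt_of_ne' hj) ht0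
  refine ⟨0, templateRBMBias u (p · / t) (t ^ 2), templateRBMWeight u (t ^ 2), ?_⟩
  show klSum p (fun v => rbmWeight _ _ _ v / ∑ w, rbmWeight _ _ _ w) < ε
  simp only [rbmWeight_template (g := (p · / t)) hpu (pow_pos ht0 2), ← mul_sum,
    mul_div_mul_left _ _ (two_ne_zero (α := ℝ))]
  refine (klSum_templateProduct_le hp0 hp1 hu hsupp ht0 ht1).trans_lt ?_
  simpa using htε
end

section
/- For the single-neuron RBM weight function W_H(v, H) = iπ/8 - (ln 2)/2 - iπv/2 - iπH/4 + iπvH with v, H ∈ {0,1}, one has ∑_{H ∈ {0,1}} exp(W_H(v, H) + W_H(v', H)) = (1/√2)·(-1)^{v·v'} for all v, v' ∈ {0,1}. -/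
open Complex in
lemma exp_form (b : ℝ) :
    Complex.exp (-(Real.log 2 : ℂ) + (b : ℂ) * I)
      = (1/2 : ℂ) * ((Real.cos b : ℂ) + (Real.sin b : ℂ) * I) := by
  rw [Complex.exp_add, Complex.exp_mul_I, ← Complex.ofReal_neg, ← Complex.ofReal_exp,
    Real.exp_neg, Real.exp_log (by norm_num : (0:ℝ) < 2)]
  push_cast
  ring

open Complex in
/-- Tracing out the hidden unit of the DBM weight function `W_H` reproduces the
Hadamard-gate matrix element `(1/√2)(-1)^{v v'}`. -/
theorem dbm_hadamard_gate (W : ℕ → ℕ → ℂ)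
    (hW : ∀ v H : ℕ, W v H = I * Real.pi / 8 - Real.log 2 / 2 - I * Real.pi * v / 2
      - I * Real.pi * H / 4 + I * Real.pi * v * H) :
    ∀ v v' : ℕ, (v = 0 ∨ v = 1) → (v' = 0 ∨ v' = 1) →
      ∑ H ∈ ({0, 1} : Finset ℕ), Complex.exp (W v H + W v' H)
        = (1 / Real.sqrt 2) * (-1) ^ (v * v') := by
  have hs : Real.sqrt 2 * Real.sqrt 2 = 2 := Real.mul_self_sqrt (by norm_num)
  have hsne : (Real.sqrt 2 : ℝ) ≠ 0 := by positivity
  have h12 : (1:ℝ)/Real.sqrt 2 = Real.sqrt 2 / 2 := by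
    rw [div_eq_div_iff hsne (by norm_num), one_mul, hs]
  have hc3 : Real.cos (3*Real.pi/4) = -(Real.sqrt 2/2) := by
    rw [show (3*Real.pi/4) = Real.pi - Real.pi/4 by ring, Real.cos_pi_sub,
      Real.cos_pi_div_four]
  have hs3 : Real.sin (3*Real.pi/4) = Real.sqrt 2/2 := by
    rw [show (3*Real.pi/4) = Real.pi - Real.pi/4 by ring, Real.sin_pi_sub,
      Real.sin_pi_div_four]
  have key : ((Real.sqrt 2 : ℝ):ℂ) * (1/2) = 1 / ((Real.sqrt 2 : ℝ):ℂ) := by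
    rw [eq_div_iff (by exact_mod_cast hsne)]
    rw [show ((Real.sqrt 2 : ℝ):ℂ) * (1/2) * ((Real.sqrt 2 : ℝ):ℂ)
        = ((Real.sqrt 2 * Real.sqrt 2 : ℝ):ℂ) * (1/2) by push_cast; ring, hs]
    norm_num
  rintro v v' (rfl | rfl) (rfl | rfl) <;>
    rw [Finset.sum_insert (by norm_num), Finset.sum_singleton]
  · rw [show W 0 0 + W 0 0 = -(Real.log 2:ℂ) + ((Real.pi/4 : ℝ):ℂ)*I by
        simp only [hW]; push_cast; ring,
      show W 0 1 + W 0 1 = -(Real.log 2:ℂ) + ((-(Real.pi/4) : ℝ):ℂ)*I by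
        simp only [hW]; push_cast; ring,
      exp_form, exp_form]
    simp only [Real.cos_neg, Real.sin_neg, Real.cos_pi_div_four, Real.sin_pi_div_four, h12]
    push_cast
    ring_nf
    rw [inv_eq_one_div, ← key]
  · rw [show W 0 0 + W 1 0 = -(Real.log 2:ℂ) + ((-(Real.pi/4) : ℝ):ℂ)*I by
        simp only [hW]; push_cast; ring,
      show W 0 1 + W 1 1 = -(Real.log 2:ℂ) + ((Real.pi/4 : ℝ):ℂ)*I by
        simp only [hW]; push_cast; ring,
      exp_form, exp_form]
    simp only [Real.cos_neg, Real.sin_neg, Real.cos_pi_div_four, Real.sin_pi_div_four, h12]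
    push_cast
    ring_nf
    rw [inv_eq_one_div, ← key]
  · rw [show W 1 0 + W 0 0 = -(Real.log 2:ℂ) + ((-(Real.pi/4) : ℝ):ℂ)*I by
        simp only [hW]; push_cast; ring,
      show W 1 1 + W 0 1 = -(Real.log 2:ℂ) + ((Real.pi/4 : ℝ):ℂ)*I by
        simp only [hW]; push_cast; ring,
      exp_form, exp_form]
    simp only [Real.cos_neg, Real.sin_neg, Real.cos_pi_div_four, Real.sin_pi_div_four, h12]
    push_cast
    ring_nf
    rw [inv_eq_one_div, ← key]
  · rw [show W 1 0 + W 1 0 = -(Real.log 2:ℂ) + ((-(3*Real.pi/4) : ℝ):ℂ)*I by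
        simp only [hW]; push_cast; ring,
      show W 1 1 + W 1 1 = -(Real.log 2:ℂ) + ((3*Real.pi/4 : ℝ):ℂ)*I by
        simp only [hW]; push_cast; ring,
      exp_form, exp_form]
    simp only [Real.cos_neg, Real.sin_neg, hc3, hs3, h12]
    push_cast
    ring_nf
    rw [inv_eq_one_div, ← key]
    ring
end

section
/- For an RBM with n visible binary units and m hidden binary units and complex parameters (aᵢ, bⱼ, Wᵢⱼ), the unnormalized RBM state ∑_{v∈{0,1}^n} (∏ᵢ e^{aᵢvᵢ}) ∏ⱼ(1 + e^{bⱼ + ∑ᵢ vᵢWᵢⱼ}) |v⟩ can be written as a matrix product state with bond dimension at most 2^m: there exist, for each site i, matrices A^{[i]}_{vᵢ} of size at most 2^m × 2^m, together with boundary vectors, such that the coefficient of |v⟩ equals the contraction of the matrix product A^{[1]}_{v₁} A^{[2]}_{v₂} ⋯ A^{[n]}_{vₙ} with these boundary vectors. -/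
open Matrix

lemma diag_list_prod {N : ℕ} : ∀ (n : ℕ) (d : Fin n → Fin N → ℂ),
    (List.ofFn fun i => Matrix.diagonal (d i)).prod
      = Matrix.diagonal (fun k => ∏ i, d i k) := by
  intro n
  induction n with
  | zero => intro d; simp [Matrix.diagonal_one]
  | succ n ih =>
      intro d
      rw [List.ofFn_succ, List.prod_cons]
      have := ih (fun i => d i.succ)
      rw [this, Matrix.diagonal_mul_diagonal]
      exact congrArg Matrix.diagonal
        (funext fun k => (Fin.prod_univ_succ fun i => d i k).symm)

lemma one_add_exp (c : ℂ) : 1 + Complex.exp c = ∑ x : Fin 2, Complex.exp (c * ((x : ℕ) : ℂ)) := by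
  rw [Fin.sum_univ_two]
  norm_num

/-- Every RBM state with `n` visible and `m` hidden binary units can be written as
an (open-boundary) matrix product state of bond dimension at most `2^m`: there are
site matrices `A i (vᵢ)` of size `2^m × 2^m` and boundary vectors `L, R` such that
the RBM coefficient of `|v⟩` equals `L ⋅ (A 1 (v₁) ⋯ A n (vₙ)) ⋅ R`. -/
theorem rbm_is_mps (n m : ℕ) (a : Fin n → ℂ) (b : Fin m → ℂ) (W : Fin n → Fin m → ℂ) :
    ∃ (A : Fin n → Fin 2 → Matrix (Fin (2 ^ m)) (Fin (2 ^ m)) ℂ)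
      (L R : Fin (2 ^ m) → ℂ),
      ∀ v : Fin n → Fin 2,
        (∏ i, Complex.exp (a i * ((v i : ℕ) : ℂ)))
          * ∏ j, (1 + Complex.exp (b j + ∑ i, ((v i : ℕ) : ℂ) * W i j))
        = L ⬝ᵥ ((List.ofFn fun i => A i (v i)).prod.mulVec R) := by
  -- bond index ↔ hidden configuration
  set e : (Fin m → Fin 2) ≃ Fin (2 ^ m) := finFunctionFinEquiv
  refine ⟨fun i v => Matrix.diagonal (fun k =>
      Complex.exp (a i * ((v : ℕ) : ℂ)
        + ((v : ℕ) : ℂ) * ∑ j, W i j * (((e.symm k j : ℕ) : ℂ)))),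
    fun _ => 1,
    fun k => ∏ j, Complex.exp (b j * ((e.symm k j : ℕ) : ℂ)), ?_⟩
  intro v
  rw [diag_list_prod]
  -- compute the RHS as a sum over hidden configurations
  have hRHS : (fun _ => (1:ℂ)) ⬝ᵥ
      ((Matrix.diagonal fun k => ∏ i,
        Complex.exp (a i * ((v i : ℕ) : ℂ)
          + ((v i : ℕ) : ℂ) * ∑ j, W i j * (((e.symm k j : ℕ) : ℂ)))).mulVec
        (fun k => ∏ j, Complex.exp (b j * ((e.symm k j : ℕ) : ℂ))))
      = ∑ g : Fin m → Fin 2,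
          (∏ i, Complex.exp (a i * ((v i : ℕ) : ℂ)
              + ((v i : ℕ) : ℂ) * ∑ j, W i j * (((g j : ℕ) : ℂ))))
            * ∏ j, Complex.exp (b j * ((g j : ℕ) : ℂ)) := by
    rw [dotProduct]
    simp only [one_mul, Matrix.mulVec_diagonal]
    rw [← e.sum_comp]
    simp only [Equiv.symm_apply_apply]
  rw [hRHS]
  -- now compute the LHS
  have hLHS : ∀ j, (1 + Complex.exp (b j + ∑ i, ((v i : ℕ) : ℂ) * W i j))
      = ∑ x : Fin 2, Complex.exp ((b j + ∑ i, ((v i : ℕ) : ℂ) * W i j) * ((x : ℕ) : ℂ)) :=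
    fun j => one_add_exp _
  simp only [hLHS]
  rw [Fintype.prod_sum]
  rw [Finset.mul_sum]
  refine Finset.sum_congr rfl ?_
  intro g _
  simp only [← Complex.exp_sum]
  rw [← Complex.exp_add, ← Complex.exp_add]
  congr 1
  simp only [add_mul, Finset.sum_add_distrib, Finset.mul_sum, Finset.sum_mul, mul_add]
  rw [Finset.sum_comm]
  ring_nf
end

section
/- Let Ψ(v₁,…,vₙ) = ∏_{k ∈ K} φ_k(v_{S_k}) be a product of complex factors, each depending only on a subset S_k of the variables, and suppose the system is bipartitioned into regions A and A^c such that every S_k intersecting both A and A^c satisfies |S_k| ≤ c for a constant c, and the number of such 'crossing' factors is at most L. Then the Schmidt rank of |Ψ⟩ = ∑_v Ψ(v)|v⟩ across the bipartition (A, A^c) is at most 2^{cL}, and hence the Rényi entanglement entropies satisfy S^α(A) ≤ cL·log 2 for all α. -/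
/-!
The factors supported inside `A` depend only on the configuration `x` of `A`; every other factor
meets `A` only in sites of crossing factors, of which there are at most `c L`. Hence the
coefficient matrix `M x y` factors through the restriction of `x` to these boundary sites, so its
rank is at most `2 ^ (c L)`. The nonzero eigenvalues of `M Mᴴ` form a probability vector with
`rank M` entries, and by the power-mean inequality `∑ λᵢ ^ α` lies below `r ^ (1 - α)` for
`α < 1` and above it for `α > 1`; either way the Rényi entropy is at most `log r`.
-/

open Matrix Finset Real

section Renyi

variable {ι : Type*}

theorem sum_rpow_le_card_rpow (s : Finset ι) {f : ι → ℝ} (hf : ∀ i, 0 ≤ f i)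
    (hs : ∑ i ∈ s, f i = 1) {α : ℝ} (hα0 : 0 < α) (hα1 : α ≤ 1) :
    ∑ i ∈ s, f i ^ α ≤ (#s : ℝ) ^ (1 - α) := by
  have := inner_le_weight_mul_Lp_of_nonneg s ((one_le_inv₀ hα0).2 hα1) (fun _ ↦ 1)
    (fun i ↦ f i ^ α) (fun _ ↦ zero_le_one) (fun i ↦ rpow_nonneg (hf i) α)
  simpa [rpow_rpow_inv (hf _) hα0.ne', hs] using this

theorem card_rpow_le_sum_rpow (s : Finset ι) {f : ι → ℝ} (hf : ∀ i, 0 ≤ f i)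
    (hs : ∑ i ∈ s, f i = 1) {α : ℝ} (hα : 1 ≤ α) :
    (#s : ℝ) ^ (1 - α) ≤ ∑ i ∈ s, f i ^ α := by
  have hcard : (0 : ℝ) < #s := by
    rcases s.eq_empty_or_nonempty with rfl | hne
    · simp at hs
    · exact_mod_cast hne.card_pos
  have hw : ∑ _i ∈ s, (#s : ℝ)⁻¹ = 1 := by simp [hcard.ne']
  have := rpow_arith_mean_le_arith_mean_rpow s (fun _ ↦ (#s : ℝ)⁻¹) f
    (fun _ _ ↦ by positivity) hw (fun i _ ↦ hf i) hα
  rw [← mul_sum, ← mul_sum, hs, mul_one, inv_rpow hcard.le, ← rpow_neg hcard.le] at this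
  calc (#s : ℝ) ^ (1 - α) = #s * (#s : ℝ) ^ (-α) := by
        rw [sub_eq_add_neg, rpow_add hcard, rpow_one]
    _ ≤ #s * ((#s : ℝ)⁻¹ * ∑ i ∈ s, f i ^ α) := by gcongr
    _ = ∑ i ∈ s, f i ^ α := by field_simp

noncomputable def renyiEntropy [Fintype ι] (α : ℝ) (p : ι → ℝ) : ℝ :=
  (1 - α)⁻¹ * log (∑ i, p i ^ α)

theorem renyiEntropy_le_log_of_card_support_le [Fintype ι] {p : ι → ℝ} (hp : ∀ i, 0 ≤ p i)
    (hsum : ∑ i, p i = 1) {R : ℕ} (hR : #{i | p i ≠ 0} ≤ R) {α : ℝ} (hα0 : 0 < α)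
    (hα1 : α ≠ 1) : renyiEntropy α p ≤ log R := by
  set T : Finset ι := {i | p i ≠ 0}
  have hT : ∑ i ∈ T, p i = 1 := by rw [sum_filter_ne_zero, hsum]
  have hTα : ∑ i ∈ T, p i ^ α = ∑ i, p i ^ α :=
    sum_filter_of_ne fun i _ h hi ↦ h (by rw [hi, zero_rpow hα0.ne'])
  have hTpos : (0 : ℝ) < #T := by
    rcases T.eq_empty_or_nonempty with h | hne
    · simp [h] at hT
    · exact_mod_cast hne.card_pos
  suffices renyiEntropy α p ≤ log #T from this.trans (log_le_log hTpos (by exact_mod_cast hR))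
  unfold renyiEntropy
  rw [← hTα]
  rcases hα1.lt_or_gt with hlt | hgt
  · have hpos : 0 < ∑ i ∈ T, p i ^ α := by
      obtain ⟨i, hi, hpi⟩ := exists_ne_zero_of_sum_ne_zero (hT.trans_ne one_ne_zero)
      exact sum_pos' (fun j _ ↦ rpow_nonneg (hp j) α)
        ⟨i, hi, rpow_pos_of_pos ((hp i).lt_of_ne' hpi) α⟩
    rw [inv_mul_le_iff₀ (sub_pos.2 hlt), ← log_rpow hTpos]
    exact log_le_log hpos (sum_rpow_le_card_rpow T hp hT hα0 hlt.le)
  · rw [← smul_eq_mul, inv_smul_le_iff_of_neg (sub_neg.2 hgt), smul_eq_mul, ← log_rpow hTpos]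
    exact log_le_log (rpow_pos_of_pos hTpos _) (card_rpow_le_sum_rpow T hp hT hgt.le)

end Renyi

theorem Matrix.renyiEntropy_eigenvalues_le_log_of_rank_le {m n : Type*} [Fintype m]
    [DecidableEq m] [Fintype n] (M : Matrix m n ℂ) (htr : (M * Mᴴ).trace = 1) {R : ℕ}
    (hR : M.rank ≤ R) {α : ℝ} (hα0 : 0 < α) (hα1 : α ≠ 1) :
    renyiEntropy α (isHermitian_mul_conjTranspose_self M).eigenvalues ≤ log R := by
  set hH := isHermitian_mul_conjTranspose_self M
  have hsum : ∑ i, hH.eigenvalues i = 1 := by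
    have := hH.trace_eq_sum_eigenvalues.symm.trans htr
    rwa [← RCLike.ofReal_sum, ← RCLike.ofReal_one, RCLike.ofReal_inj] at this
  have hcard : #{i | hH.eigenvalues i ≠ 0} = M.rank := by
    open scoped ComplexOrder in
    rw [← rank_self_mul_conjTranspose, hH.rank_eq_card_non_zero_eigs, Fintype.card_subtype]
  exact renyiEntropy_le_log_of_card_support_le (eigenvalues_self_mul_conjTranspose_nonneg M) hsum
    (hcard.trans_le hR) hα0 hα1

theorem Matrix.rank_le_card_of_factorization {m n ι R : Type*} [Fintype n] [Fintype ι]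
    [Field R] (M : Matrix m n R) (p : m → ι) (f : m → R) (g : ι → n → R)
    (h : ∀ x y, M x y = f x * g (p x) y) : M.rank ≤ Fintype.card ι := by
  classical
  have hM : M = of (fun x i ↦ if p x = i then f x else 0) * of g := by
    ext x y
    simp [h, mul_apply, ite_mul]
  rw [hM]
  exact (rank_mul_le_left _ _).trans (rank_le_card_width _)

section Bipartition

variable {V K σ : Type*} [Fintype V] [DecidableEq V] [Fintype K] (S : K → Finset V)
  (A : Finset V)

def crossingFactors : Finset K :=
  univ.filter fun k ↦ (S k ∩ A).Nonempty ∧ (S k ∩ Aᶜ).Nonempty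

def crossingBoundary : Finset V :=
  (crossingFactors S A).biUnion fun k ↦ S k ∩ A

theorem crossingBoundary_subset : crossingBoundary S A ⊆ A := by
  simp [crossingBoundary, subset_iff]

theorem mem_crossingBoundary {k : K} {i : V} (hi : i ∈ S k) (hiA : i ∈ A) (hk : ¬S k ⊆ A) :
    i ∈ crossingBoundary S A := by
  have hout : (S k ∩ Aᶜ).Nonempty := by
    obtain ⟨j, hj, hjA⟩ := not_subset.1 hk
    exact ⟨j, mem_inter.2 ⟨hj, mem_compl.2 hjA⟩⟩
  exact mem_biUnion.2 ⟨k, mem_filter.2 ⟨mem_univ k, ⟨i, mem_inter.2 ⟨hi, hiA⟩⟩, hout⟩,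
    mem_inter.2 ⟨hi, hiA⟩⟩

theorem card_crossingBoundary_le {c : ℕ}
    (hc : ∀ k, (S k ∩ A).Nonempty → (S k ∩ Aᶜ).Nonempty → #(S k) ≤ c) :
    #(crossingBoundary S A) ≤ c * #(crossingFactors S A) :=
  calc #(crossingBoundary S A) ≤ ∑ k ∈ crossingFactors S A, #(S k ∩ A) := card_biUnion_le
    _ ≤ ∑ _k ∈ crossingFactors S A, c := sum_le_sum fun k hk ↦ by
        obtain ⟨-, hin, hout⟩ := mem_filter.1 hk
        exact (card_le_card inter_subset_left).trans (hc k hin hout)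
    _ = c * #(crossingFactors S A) := by rw [sum_const, smul_eq_mul, mul_comm]

def glue (x : A → σ) (y : {i // i ∉ A} → σ) : V → σ :=
  fun i ↦ if h : i ∈ A then x ⟨i, h⟩ else y ⟨i, h⟩

variable {S A}

theorem rank_le_card_pow_card_crossingBoundary [Fintype σ] [Inhabited σ] {R : Type*} [Field R]
    (φ : K → (V → σ) → R) (hdep : ∀ k (v w : V → σ), (∀ i ∈ S k, v i = w i) → φ k v = φ k w)
    (M : Matrix (A → σ) ({i // i ∉ A} → σ) R) (hM : ∀ x y, M x y = ∏ k, φ k (glue A x y)) :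
    M.rank ≤ Fintype.card σ ^ #(crossingBoundary S A) := by
  classical
  set B := crossingBoundary S A
  let restrict (x : A → σ) : B → σ := fun i ↦ x ⟨i, crossingBoundary_subset S A i.2⟩
  let extend (b : B → σ) : A → σ := fun i ↦ if h : i.1 ∈ B then b ⟨i, h⟩ else default
  let inside : Finset K := univ.filter fun k ↦ S k ⊆ A
  have h_inside : ∀ k ∈ inside, ∀ x y, φ k (glue A x y) = φ k (glue A x fun _ ↦ default) := by
    intro k hk x y
    refine hdep k _ _ fun i hi ↦ ?_
    simp [glue, (mem_filter.1 hk).2 hi]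
  have h_outside : ∀ k ∈ insideᶜ, ∀ x y,
      φ k (glue A x y) = φ k (glue A (extend (restrict x)) y) := by
    intro k hk x y
    refine hdep k _ _ fun i hi ↦ ?_
    by_cases hiA : i ∈ A
    · have hiB : i ∈ B := mem_crossingBoundary S A hi hiA (by simpa [inside] using hk)
      simp [glue, extend, restrict, hiA, hiB]
    · simp [glue, hiA]
  calc M.rank ≤ Fintype.card (B → σ) :=
        M.rank_le_card_of_factorization restrict
          (fun x ↦ ∏ k ∈ inside, φ k (glue A x fun _ ↦ default))
          (fun b y ↦ ∏ k ∈ insideᶜ, φ k (glue A (extend b) y)) fun x y ↦ by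
            rw [hM, ← prod_mul_prod_compl inside, prod_congr rfl fun k hk ↦ h_inside k hk x y,
              prod_congr rfl fun k hk ↦ h_outside k hk x y]
    _ = Fintype.card σ ^ #B := by simp

end Bipartition

open scoped Classical in
/-- Entanglement area-law mechanism for product-form (e.g. RBM) states: if
`Ψ(v) = ∏ₖ φₖ(v)` where each factor `φₖ` depends only on the variables in `Sₖ`,
every factor crossing the bipartition `(A, Aᶜ)` involves at most `c` variables,
and there are at most `L` crossing factors, then the Schmidt rank of `Ψ` across
the bipartition (the rank of the coefficient matrix `M`) is at most `2^{cL}`,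
and—provided the state is normalized—all Rényi entanglement entropies
`S^α(A) = (1-α)⁻¹ log Tr ρ_A^α` (computed from the eigenvalues of the reduced
density matrix `ρ_A = M Mᴴ`) are bounded by `c L log 2`. -/
theorem product_state_schmidt_rank_bound (n : ℕ) (K : Type) [Fintype K]
    (S : K → Finset (Fin n)) (φ : K → (Fin n → Fin 2) → ℂ)
    (hdep : ∀ k (v w : Fin n → Fin 2), (∀ i ∈ S k, v i = w i) → φ k v = φ k w)
    (A : Finset (Fin n)) (c L : ℕ)
    (hc : ∀ k, (S k ∩ A).Nonempty → (S k ∩ Aᶜ).Nonempty → (S k).card ≤ c)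
    (hL : (Finset.univ.filter
      (fun k => (S k ∩ A).Nonempty ∧ (S k ∩ Aᶜ).Nonempty)).card ≤ L)
    (M : Matrix ({i // i ∈ A} → Fin 2) ({i // i ∉ A} → Fin 2) ℂ)
    (hM : ∀ x y, M x y = ∏ k, φ k (fun i => if h : i ∈ A then x ⟨i, h⟩ else y ⟨i, h⟩)) :
    M.rank ≤ 2 ^ (c * L) ∧
    ((M * Mᴴ).trace = 1 →
      ∀ α : ℝ, 0 < α → α ≠ 1 →
        (1 - α)⁻¹ * Real.log (∑ i,
            ((isHermitian_mul_conjTranspose_self M).eigenvalues i : ℝ) ^ α)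
          ≤ (c * L : ℝ) * Real.log 2) := by
  have hB : #(crossingBoundary S A) ≤ c * L :=
    (card_crossingBoundary_le S A hc).trans (Nat.mul_le_mul_left c hL)
  have hrank : M.rank ≤ 2 ^ (c * L) :=
    (rank_le_card_pow_card_crossingBoundary φ hdep M hM).trans
      (by simpa using Nat.pow_le_pow_right two_pos hB)
  refine ⟨hrank, fun htr α hα0 hα1 ↦ ?_⟩
  calc renyiEntropy α (isHermitian_mul_conjTranspose_self M).eigenvalues
      ≤ log ((2 ^ (c * L) : ℕ) : ℝ) :=
        M.renyiEntropy_eigenvalues_le_log_of_rank_le htr hrank hα0 hα1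
    _ = (c * L : ℝ) * log 2 := by push_cast; rw [log_pow]; push_cast; ring
end
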